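/- Let Δ be a simplicial complex and σ ∈ Δ a face that is not an intersection of facets of Δ. Then link_Δ σ is acyclic (all reduced homology groups vanish). -/

import Mathlib

open Finset
open scoped Classical

/-- An abstract simplicial complex: a collection of finite subsets of the
vertex type `V` closed under taking subsets. -/
def IsComplex {V : Type} (K : Set (Finset V)) : Prop :=
  ∀ s ∈ K, ∀ t ⊆ s, t ∈ K

/-- The link of a face `σ` in `K`: all faces `τ` disjoint from `σ` with `σ ∪ τ ∈ K`. -/
def link {V : Type} [DecidableEq V] (K : Set (Finset V)) (σ : Finset V) : Set (Finset V) :=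
  {τ | Disjoint σ τ ∧ σ ∪ τ ∈ K}

theorem link_isComplex {V : Type} [DecidableEq V] {K : Set (Finset V)} (hK : IsComplex K)
    (σ : Finset V) : IsComplex (link K σ) := by
  intro s hs t ht
  exact ⟨hs.1.mono_right ht, hK _ hs.2 _ (Finset.union_subset_union_right ht)⟩

/-- The incidence sign of a vertex `x` with respect to a face `σ`, relative to a fixed
(arbitrary) well-ordering of the vertices. -/
noncomputable def bdrySign {V : Type} (σ : Finset V) (x : V) : ℤ :=
  (-1 : ℤ) ^ (σ.filter (fun y => WellOrderingRel y x)).card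

/-- The total (reduced) simplicial chain module of `K` with coefficients in `𝕜`:
functions from the faces of `K` (including the empty face) to `𝕜`. -/
abbrev TotalChains (𝕜 : Type) [Field 𝕜] {V : Type} (K : Set (Finset V)) : Type :=
  {s : Finset V // s ∈ K} → 𝕜

/-- The simplicial boundary operator on the total chain module, written in terms of
cofaces: `(∂c)(τ) = Σ_{x ∉ τ, τ ∪ {x} ∈ K} ± c(τ ∪ {x})`. -/
noncomputable def bdryMap (𝕜 : Type) [Field 𝕜] {V : Type} [DecidableEq V] [Fintype V]
    (K : Set (Finset V)) : TotalChains 𝕜 K →ₗ[𝕜] TotalChains 𝕜 K where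
  toFun c := fun τ => ∑ x ∈ τ.1ᶜ,
    if h : insert x τ.1 ∈ K then bdrySign τ.1 x • c ⟨insert x τ.1, h⟩ else 0
  map_add' c d := by
    funext τ
    rw [Pi.add_apply, ← Finset.sum_add_distrib]
    refine Finset.sum_congr rfl fun x _ => ?_
    split
    · rw [Pi.add_apply, smul_add]
    · rw [add_zero]
  map_smul' a c := by
    funext τ
    rw [RingHom.id_apply, Pi.smul_apply, Finset.smul_sum]
    refine Finset.sum_congr rfl fun x _ => ?_
    split
    · rw [Pi.smul_apply, smul_comm]
    · rw [smul_zero]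

/-- The submodule of chains supported on faces of cardinality `i + 1`
(the chains of homological degree `i`). -/
def degChains (𝕜 : Type) [Field 𝕜] {V : Type} (K : Set (Finset V)) (i : ℤ) :
    Submodule 𝕜 (TotalChains 𝕜 K) where
  carrier := {c | ∀ τ : {s : Finset V // s ∈ K}, (τ.1.card : ℤ) ≠ i + 1 → c τ = 0}
  add_mem' := by
    intro a b ha hb τ hτ
    rw [Pi.add_apply, ha τ hτ, hb τ hτ, add_zero]
  zero_mem' := fun τ _ => rfl
  smul_mem' := by
    intro a c hc τ hτ
    rw [Pi.smul_apply, hc τ hτ, smul_zero]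

/-- The `i`-th reduced simplicial homology of the complex `K` over the field `𝕜`:
degree-`i` cycles modulo boundaries of degree-`(i+1)` chains. -/
noncomputable abbrev redHomology (𝕜 : Type) [Field 𝕜] {V : Type} [DecidableEq V] [Fintype V]
    (K : Set (Finset V)) (i : ℤ) : Type :=
  ↥(degChains 𝕜 K i ⊓ LinearMap.ker (bdryMap 𝕜 K)) ⧸
    Submodule.comap (degChains 𝕜 K i ⊓ LinearMap.ker (bdryMap 𝕜 K)).subtype
      (Submodule.map (bdryMap 𝕜 K) (degChains 𝕜 K (i + 1)))

/-- A facet of a simplicial complex: a face that is maximal with respect to inclusion. -/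
def IsFacet {V : Type} (K : Set (Finset V)) (F : Finset V) : Prop :=
  F ∈ K ∧ ∀ G ∈ K, F ⊆ G → F = G

/-!
If `σ` is not an intersection of facets, the intersection of the facets containing `σ` has a
vertex `v ∉ σ`. Every face of `link_Δ σ` lies in a facet of `Δ` containing `σ`, so it stays a face
of the link after adding `v`: the link is a cone with apex `v`. The cone operator
`(h c)(τ) = ± c(τ \ {v})` is then a contracting homotopy, `∂ h + h ∂ = id`, so every cycle is a
boundary.
-/

section Facets

variable {V : Type} [Fintype V] {K : Set (Finset V)}

theorem exists_isFacet_superset {s : Finset V} (hs : s ∈ K) : ∃ F, IsFacet K F ∧ s ⊆ F := by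
  obtain ⟨F, hF, hmax⟩ := Finset.exists_max_image
    {G | G ∈ K ∧ s ⊆ G} card ⟨s, by simp [hs]⟩
  simp only [mem_filter, mem_univ, true_and] at hF
  refine ⟨F, ⟨hF.1, fun G hG hFG => eq_of_subset_of_card_le hFG (hmax G ?_)⟩, hF.2⟩
  simp [hG, hF.2.trans hFG]

theorem exists_mem_facets_of_not_inter_facets [DecidableEq V] {σ : Finset V} (hσ : σ ∈ K)
    (hnot : ¬ ∃ S : Finset (Finset V), S.Nonempty ∧ (∀ F ∈ S, IsFacet K F) ∧ σ = S.inf id) :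
    ∃ v ∉ σ, ∀ F, IsFacet K F → σ ⊆ F → v ∈ F := by
  set S : Finset (Finset V) := {F | IsFacet K F ∧ σ ⊆ F}
  have hS : ∀ F, F ∈ S ↔ IsFacet K F ∧ σ ⊆ F := by simp [S]
  have hSne : S.Nonempty := by
    obtain ⟨F, hF⟩ := exists_isFacet_superset hσ
    exact ⟨F, (hS F).2 hF⟩
  have hle : σ ≤ S.inf id := Finset.le_inf fun F hF => ((hS F).1 hF).2
  have hne : σ ≠ S.inf id := fun h => hnot ⟨S, hSne, fun F hF => ((hS F).1 hF).1, h⟩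
  obtain ⟨v, hvS, hvσ⟩ := exists_of_ssubset (hle.lt_of_ne hne)
  exact ⟨v, hvσ, fun F hF hσF => inf_le (f := id) ((hS F).2 ⟨hF, hσF⟩) hvS⟩

end Facets

section Signs

variable {V : Type}

theorem bdrySign_mul_self (s : Finset V) (x : V) : bdrySign s x * bdrySign s x = 1 := by
  rw [bdrySign, ← pow_add, ← two_mul, pow_mul, neg_one_sq, one_pow]

variable [DecidableEq V]

theorem bdrySign_insert {s : Finset V} {x : V} (hx : x ∉ s) (y : V) :
    bdrySign (insert x s) y = (if WellOrderingRel x y then -1 else 1) * bdrySign s y := by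
  unfold bdrySign
  rw [filter_insert]
  split_ifs with h
  · rw [card_insert_of_notMem fun h' => hx (mem_filter.1 h').1, pow_succ, mul_comm]
  · rw [one_mul]

theorem bdrySign_insert_mul_bdrySign_insert {ρ : Finset V} {x v : V} (hx : x ∉ ρ) (hv : v ∉ ρ)
    (hxv : x ≠ v) :
    bdrySign (insert v ρ) x * bdrySign (insert x ρ) v = -(bdrySign ρ v * bdrySign ρ x) := by
  rw [bdrySign_insert hv, bdrySign_insert hx]
  rcases trichotomous_of WellOrderingRel x v with h | rfl | h
  · simp only [h, asymm h, if_true, if_false]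
    ring
  · exact (hxv rfl).elim
  · simp only [h, asymm h, if_true, if_false]
    ring

end Signs

section FullSimplex

/- Boundary and cone operators on the chains of the full simplex on `V`. Through `extendChain`
they restrict to `bdryMap` on any complex and to `coneMap` on a cone with apex `v`. -/

variable {V : Type} [DecidableEq V] {M : Type} [AddCommGroup M]

noncomputable def simplexCone (v : V) (f : Finset V → M) (s : Finset V) : M :=
  if v ∈ s then bdrySign (s.erase v) v • f (s.erase v) else 0

variable [Fintype V]

noncomputable def simplexBdry (f : Finset V → M) (s : Finset V) : M :=
  ∑ x ∈ sᶜ, bdrySign s x • f (insert x s)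

theorem simplexBdry_simplexCone_of_notMem (v : V) (f : Finset V → M) {s : Finset V}
    (hv : v ∉ s) : simplexBdry (simplexCone v f) s = f s := by
  rw [simplexBdry, sum_eq_single_of_mem v (mem_compl.2 hv)]
  · rw [simplexCone, if_pos (mem_insert_self v s), erase_insert hv, smul_smul,
      bdrySign_mul_self, one_smul]
  · intro x _ hxv
    rw [simplexCone, if_neg (by simp [hv, Ne.symm hxv]), smul_zero]

theorem simplexBdry_simplexCone_add_simplexCone_simplexBdry_insert (v : V)
    (f : Finset V → M) {ρ : Finset V} (hv : v ∉ ρ) :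
    simplexBdry (simplexCone v f) (insert v ρ) + simplexCone v (simplexBdry f) (insert v ρ) =
      f (insert v ρ) := by
  have hcompl : ρᶜ = insert v (insert v ρ)ᶜ := by
    rw [compl_insert, insert_erase (mem_compl.2 hv)]
  unfold simplexBdry
  rw [simplexCone, if_pos (mem_insert_self v ρ), erase_insert hv, hcompl,
    sum_insert (by simp), smul_add, smul_smul, bdrySign_mul_self, one_smul, add_left_comm,
    add_eq_left, smul_sum, ← sum_add_distrib]
  refine sum_eq_zero fun x hx => ?_
  have hxv : x ≠ v := by rintro rfl; simp at hx
  have hxρ : x ∉ ρ := fun h => by simp [h] at hx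
  rw [simplexCone, if_pos (mem_insert_of_mem (mem_insert_self v ρ)), insert_comm,
    erase_insert (by simp [hv, hxv.symm]), smul_smul, smul_smul, ← add_smul,
    bdrySign_insert_mul_bdrySign_insert hxρ hv hxv, neg_add_cancel, zero_smul]

theorem simplexBdry_simplexCone_add_simplexCone_simplexBdry (v : V) (f : Finset V → M)
    (s : Finset V) :
    simplexBdry (simplexCone v f) s + simplexCone v (simplexBdry f) s = f s := by
  by_cases hv : v ∈ s
  · rw [← insert_erase hv]
    exact simplexBdry_simplexCone_add_simplexCone_simplexBdry_insert v f (notMem_erase v s)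
  · rw [simplexCone, if_neg hv, add_zero, simplexBdry_simplexCone_of_notMem v f hv]

end FullSimplex

def IsConeApex {V : Type} [DecidableEq V] (L : Set (Finset V)) (v : V) : Prop :=
  ∀ τ ∈ L, insert v τ ∈ L

theorem isConeApex_link {V : Type} [DecidableEq V] [Fintype V] {K : Set (Finset V)}
    (hK : IsComplex K) {σ : Finset V} {v : V} (hvσ : v ∉ σ)
    (hv : ∀ F, IsFacet K F → σ ⊆ F → v ∈ F) : IsConeApex (link K σ) v := by
  rintro τ ⟨hdisj, hστ⟩
  obtain ⟨F, hF, hστF⟩ := exists_isFacet_superset hστ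
  have hvF : v ∈ F := hv F hF (subset_union_left.trans hστF)
  refine ⟨disjoint_insert_right.2 ⟨hvσ, hdisj⟩, hK F hF.1 _ ?_⟩
  rw [union_insert]
  exact insert_subset hvF hστF

section Chains

variable {𝕜 : Type} [Field 𝕜] {V : Type} {L : Set (Finset V)}

noncomputable def extendChain (c : TotalChains 𝕜 L) (s : Finset V) : 𝕜 :=
  if h : s ∈ L then c ⟨s, h⟩ else 0

theorem extendChain_coe (c : TotalChains 𝕜 L) (τ : {s : Finset V // s ∈ L}) :
    extendChain c τ.1 = c τ :=
  dif_pos τ.2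

theorem extendChain_of_notMem (c : TotalChains 𝕜 L) {s : Finset V} (hs : s ∉ L) :
    extendChain c s = 0 :=
  dif_neg hs

theorem extendChain_eq_zero_of_mem_degChains {c : TotalChains 𝕜 L} {i : ℤ}
    (hc : c ∈ degChains 𝕜 L i) {s : Finset V} (hs : (s.card : ℤ) ≠ i + 1) :
    extendChain c s = 0 := by
  by_cases h : s ∈ L
  · rw [extendChain, dif_pos h]
    exact hc ⟨s, h⟩ hs
  · exact extendChain_of_notMem c h

variable [DecidableEq V]

variable (𝕜 L) in
noncomputable def coneMap (v : V) : TotalChains 𝕜 L →ₗ[𝕜] TotalChains 𝕜 L where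
  toFun c τ := simplexCone v (extendChain c) τ.1
  map_add' c d := by
    funext τ
    simp only [simplexCone, extendChain, Pi.add_apply]
    split_ifs <;> simp [smul_add]
  map_smul' a c := by
    funext τ
    simp only [simplexCone, extendChain, Pi.smul_apply, RingHom.id_apply]
    split_ifs <;> simp [mul_left_comm]

theorem coneMap_apply (v : V) (c : TotalChains 𝕜 L) (τ : {s : Finset V // s ∈ L}) :
    coneMap 𝕜 L v c τ = simplexCone v (extendChain c) τ.1 :=
  rfl

theorem extendChain_coneMap {v : V} (hv : IsConeApex L v) (c : TotalChains 𝕜 L) :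
    extendChain (coneMap 𝕜 L v c) = simplexCone v (extendChain c) := by
  funext s
  by_cases hs : s ∈ L
  · exact extendChain_coe _ ⟨s, hs⟩
  · rw [extendChain_of_notMem _ hs, simplexCone]
    split_ifs with hvs
    · rw [extendChain_of_notMem c fun h => hs (insert_erase hvs ▸ hv _ h), smul_zero]
    · rfl

theorem coneMap_mem_degChains (v : V) {c : TotalChains 𝕜 L} {i : ℤ}
    (hc : c ∈ degChains 𝕜 L i) : coneMap 𝕜 L v c ∈ degChains 𝕜 L (i + 1) := by
  intro τ hτ
  rw [coneMap_apply, simplexCone]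
  split_ifs with hvτ
  · have hcard : ((τ.1.erase v).card : ℤ) ≠ i + 1 := by
      have := card_pos.2 ⟨v, hvτ⟩
      rw [card_erase_of_mem hvτ]
      omega
    rw [extendChain_eq_zero_of_mem_degChains hc hcard, smul_zero]
  · rfl

variable [Fintype V]

theorem bdryMap_apply (c : TotalChains 𝕜 L) (τ : {s : Finset V // s ∈ L}) :
    bdryMap 𝕜 L c τ = simplexBdry (extendChain c) τ.1 := by
  refine sum_congr rfl fun x _ => ?_
  split_ifs with h
  · rw [extendChain, dif_pos h]
  · rw [extendChain_of_notMem c h, smul_zero]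

theorem extendChain_bdryMap (hL : IsComplex L) (c : TotalChains 𝕜 L) :
    extendChain (bdryMap 𝕜 L c) = simplexBdry (extendChain c) := by
  funext s
  by_cases hs : s ∈ L
  · exact (extendChain_coe _ ⟨s, hs⟩).trans (bdryMap_apply c ⟨s, hs⟩)
  · rw [extendChain_of_notMem _ hs, simplexBdry]
    refine (sum_eq_zero fun x _ => ?_).symm
    rw [extendChain_of_notMem c fun h => hs (hL _ h s (subset_insert x s)), smul_zero]

theorem bdryMap_coneMap_add_coneMap_bdryMap (hL : IsComplex L) {v : V} (hv : IsConeApex L v)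
    (c : TotalChains 𝕜 L) :
    bdryMap 𝕜 L (coneMap 𝕜 L v c) + coneMap 𝕜 L v (bdryMap 𝕜 L c) = c := by
  funext τ
  rw [Pi.add_apply, bdryMap_apply, coneMap_apply, extendChain_coneMap hv,
    extendChain_bdryMap hL, simplexBdry_simplexCone_add_simplexCone_simplexBdry,
    extendChain_coe]

theorem redHomology_subsingleton_of_isConeApex (hL : IsComplex L) {v : V}
    (hv : IsConeApex L v) (i : ℤ) : Subsingleton (redHomology 𝕜 L i) := by
  rw [Submodule.Quotient.subsingleton_iff, Submodule.eq_top_iff']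
  rintro ⟨z, hz⟩
  obtain ⟨hzdeg, hzcycle⟩ := Submodule.mem_inf.1 hz
  refine ⟨coneMap 𝕜 L v z, coneMap_mem_degChains v hzdeg, ?_⟩
  simpa [LinearMap.mem_ker.1 hzcycle] using bdryMap_coneMap_add_coneMap_bdryMap hL hv z

end Chains

/-- **Links of faces that are not intersections of facets are acyclic.** If a face
`σ ∈ Δ` is not an intersection of facets of `Δ`, then all reduced homology groups of
`link_Δ σ` vanish. -/
theorem link_acyclic_of_not_inter_facets (𝕜 : Type) [Field 𝕜] {V : Type} [DecidableEq V]
    [Fintype V] (K : Set (Finset V)) (hK : IsComplex K) (σ : Finset V) (hσ : σ ∈ K)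
    (hnot : ¬ ∃ S : Finset (Finset V), S.Nonempty ∧ (∀ F ∈ S, IsFacet K F) ∧
      σ = S.inf id) :
    ∀ i : ℤ, Subsingleton (redHomology 𝕜 (link K σ) i) := by
  obtain ⟨v, hvσ, hv⟩ := exists_mem_facets_of_not_inter_facets hσ hnot
  exact redHomology_subsingleton_of_isConeApex (link_isComplex hK σ) (isConeApex_link hK hvσ hv)
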